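/- The function ψ(u) = (1−u²)·arctanh(u)/u is strictly decreasing on (0,1), with lim_{u→0⁺} ψ(u) = 1 and lim_{u→1⁻} ψ(u) = 0. -/

import Mathlib

open Filter

noncomputable section

/-- Inverse hyperbolic tangent. -/
def arctanh (x : ℝ) : ℝ := (1 / 2) * Real.log ((1 + x) / (1 - x))

/-- `ψ(u) = (1−u²)·arctanh(u)/u`. -/
def psi (u : ℝ) : ℝ := (1 - u ^ 2) * arctanh u / u

/-!
Since `arctanh' = 1/(1 - u²)`, the quotient rule gives `u² ψ'(u) = u - (1 + u²) arctanh u`,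
which is negative because `arctanh u > u` (the difference `arctanh u - u` vanishes at `0` and has
derivative `u²/(1 - u²) > 0`). Near `0`, `ψ(u) = (1 - u²) · (arctanh u - arctanh 0)/u` tends to
`arctanh' 0 = 1`. Near `1`, `(1 - u²) arctanh u = ½ (1 + u) (1 - u) (log (1 + u) - log (1 - u))`
tends to `0` because `t log t → 0` as `t → 0`.
-/

open Set Topology

lemma arctanh_zero : arctanh 0 = 0 := by simp [arctanh]

lemma hasDerivAt_arctanh {x : ℝ} (hx : x ∈ Ioo (-1) 1) :
    HasDerivAt arctanh (1 / (1 - x ^ 2)) x := by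
  obtain ⟨hx₁, hx₂⟩ := hx
  have hquot : HasDerivAt (fun y : ℝ => (1 + y) / (1 - y))
      ((1 * (1 - x) - (1 + x) * (-1)) / (1 - x) ^ 2) x :=
    ((hasDerivAt_id x).const_add 1).div ((hasDerivAt_id x).const_sub 1) (by linarith)
  have hlog := (hquot.log (div_pos (by linarith) (by linarith)).ne').const_mul (1 / 2 : ℝ)
  refine hlog.congr_deriv ?_
  have : 1 + x ≠ 0 := by linarith
  have : 1 - x ≠ 0 := by linarith
  have : 1 - x ^ 2 ≠ 0 := by nlinarith
  field_simp
  ring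

lemma continuousOn_arctanh : ContinuousOn arctanh (Ioo (-1) 1) :=
  fun _ hx => (hasDerivAt_arctanh hx).continuousAt.continuousWithinAt

lemma self_lt_arctanh {x : ℝ} (hx : x ∈ Ioo 0 1) : x < arctanh x := by
  have hmono : StrictMonoOn (fun y => arctanh y - y) (Ico 0 1) := by
    refine strictMonoOn_of_hasDerivWithinAt_pos (convex_Ico 0 1)
      (f' := fun y => 1 / (1 - y ^ 2) - 1) ?_ ?_ ?_
    · exact (continuousOn_arctanh.mono fun y hy => ⟨by linarith [hy.1], hy.2⟩).sub continuousOn_id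
    · rw [interior_Ico]
      intro y hy
      exact ((hasDerivAt_arctanh ⟨by linarith [hy.1], hy.2⟩).sub (hasDerivAt_id y)).hasDerivWithinAt
    · rw [interior_Ico]
      rintro y ⟨hy₀, hy₁⟩
      have : 0 < 1 - y ^ 2 := by nlinarith
      rw [sub_pos, lt_div_iff₀ this]
      nlinarith
  simpa [arctanh_zero] using hmono ⟨le_rfl, one_pos⟩ ⟨hx.1.le, hx.2⟩ hx.1

lemma hasDerivAt_psi {x : ℝ} (hx : x ∈ Ioo 0 1) :
    HasDerivAt psi ((x - (1 + x ^ 2) * arctanh x) / x ^ 2) x := by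
  have hsq : HasDerivAt (fun u : ℝ => 1 - u ^ 2) (-(2 * x)) x := by
    simpa using (hasDerivAt_pow 2 x).const_sub 1
  have hquot := (hsq.mul (hasDerivAt_arctanh ⟨by linarith [hx.1], hx.2⟩)).div
    (hasDerivAt_id x) hx.1.ne'
  refine hquot.congr_deriv ?_
  have : x ≠ 0 := hx.1.ne'
  have : 1 - x ^ 2 ≠ 0 := by nlinarith [hx.1, hx.2]
  simp only [id, Pi.mul_apply]
  field_simp
  ring

lemma psi_strictAntiOn : StrictAntiOn psi (Ioo 0 1) := by
  refine strictAntiOn_of_hasDerivWithinAt_neg (convex_Ioo 0 1)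
    (f' := fun x => (x - (1 + x ^ 2) * arctanh x) / x ^ 2)
    (fun x hx => (hasDerivAt_psi hx).continuousAt.continuousWithinAt) ?_ ?_ <;> rw [interior_Ioo]
  · exact fun x hx => (hasDerivAt_psi hx).hasDerivWithinAt
  · intro x hx
    have hlt := self_lt_arctanh hx
    have hx₀ := hx.1
    refine div_neg_of_neg_of_pos ?_ (by positivity)
    nlinarith [mul_pos (mul_pos hx₀ hx₀) (hx₀.trans hlt)]

lemma tendsto_psi_nhdsGT_zero : Tendsto psi (𝓝[>] 0) (𝓝 1) := by
  have hslope := (hasDerivAt_arctanh (x := 0) (by norm_num)).tendsto_slope_zero_right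
  have hsq : Tendsto (fun u : ℝ => 1 - u ^ 2) (𝓝[>] 0) (𝓝 1) := by
    have : ContinuousAt (fun u : ℝ => 1 - u ^ 2) 0 := by fun_prop
    simpa using this.tendsto.mono_left nhdsWithin_le_nhds
  convert hsq.mul hslope using 2 with u
  · simp only [psi, zero_add, arctanh_zero, sub_zero, smul_eq_mul]
    ring
  · norm_num

lemma psi_eq_of_mem_Ioo {u : ℝ} (hu : u ∈ Ioo 0 1) :
    psi u = (1 + u) / (2 * u) * ((1 - u) * Real.log (1 + u) - (1 - u) * Real.log (1 - u)) := by
  obtain ⟨hu₀, hu₁⟩ := hu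
  rw [psi, arctanh, Real.log_div (by linarith) (by linarith)]
  field_simp
  ring

lemma tendsto_psi_nhdsLT_one : Tendsto psi (𝓝[<] 1) (𝓝 0) := by
  have hfactor : Tendsto (fun u : ℝ => (1 + u) / (2 * u)) (𝓝 1) (𝓝 1) := by
    have : ContinuousAt (fun u : ℝ => (1 + u) / (2 * u)) 1 := by fun_prop (disch := norm_num)
    simpa using this.tendsto
  have hplus : Tendsto (fun u : ℝ => (1 - u) * Real.log (1 + u)) (𝓝 1) (𝓝 0) := by
    have : ContinuousAt (fun u : ℝ => (1 - u) * Real.log (1 + u)) 1 := by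
      fun_prop (disch := norm_num)
    simpa using this.tendsto
  have hminus : Tendsto (fun u : ℝ => (1 - u) * Real.log (1 - u)) (𝓝 1) (𝓝 0) := by
    have hsub : Tendsto (fun u : ℝ => 1 - u) (𝓝 1) (𝓝 0) := by
      simpa using (continuous_sub_left (1 : ℝ)).tendsto 1
    simpa [Function.comp_def] using (Real.continuous_mul_log.tendsto 0).comp hsub
  have hlim := (hfactor.mul (hplus.sub hminus)).mono_left (nhdsWithin_le_nhds (s := Iio 1))
  rw [one_mul, sub_zero] at hlim
  refine hlim.congr' ?_
  filter_upwards [Ioo_mem_nhdsLT (zero_lt_one' ℝ)] with u hu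
  exact (psi_eq_of_mem_Ioo hu).symm

/-- `ψ` is strictly decreasing on `(0,1)`, with `ψ(u) → 1` as `u → 0⁺` and
`ψ(u) → 0` as `u → 1⁻`. -/
theorem psi_strictAnti_and_limits :
    StrictAntiOn psi (Set.Ioo (0 : ℝ) 1) ∧
      Tendsto psi (nhdsWithin 0 (Set.Ioi 0)) (nhds 1) ∧
      Tendsto psi (nhdsWithin 1 (Set.Iio 1)) (nhds 0) :=
  ⟨psi_strictAntiOn, tendsto_psi_nhdsGT_zero, tendsto_psi_nhdsLT_one⟩

end
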